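/- Let α ≠ 0 and κ = λ = 0, β ∈ ℝ. Every polynomial g ∈ ℝ[x,y,z] (without constant term) satisfying (x(y-1) - βz)∂g/∂x + α(1-x²)∂g/∂y + x·∂g/∂z = β₀ + β₁x + β₂y + β₃z for some reals β₀,...,β₃ is a linear combination of z and -x²/2 + y/α - y²/(2α) - βz²/2, with cofactors β₁x and β₀(1-y) respectively (in particular β₂ = -β₀ and β₃ = 0). -/

import Mathlib

/-!
Since `X z = x` and `X h = 1 - y` for `h = -x²/2 + y/α - y²/(2α) - βz²/2`, subtracting
`β₁ z + β₀ h` from `g` leaves a polynomial `p` with `p(0) = 0` and `X p = c₂ y + c₃ z`, and it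
suffices to show `p = 0`, `c₂ = c₃ = 0`.

Grade by the degree in `(x, y)`. The part of `X` raising it is `x (R + ∂_z)` with
`R = y ∂ₓ - α x ∂_y`, so the top part `Σ_k z^k P_k` of `p`, of degree `t`, satisfies
`R P_k = -(k + 1) P_{k+1}`. Descending in `k`, every `P_k` lies in `ker R`, and for `k ≥ 1` also
in `im R`. Now `R` is skew-adjoint for a weighted pairing of the coefficients that is positive
definite on `ker R`, so `ker R ∩ im R = 0`. What is left, `P_0 ∈ ker R`, is determined by its
coefficient of `y^t`, which the coefficient of `y^(t-1)` in `X p` forces to vanish once `t ≥ 3`.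
The parts of degree `≤ 2` obey recurrences in `k`, such as `(k + 1)(k + 2) v_(k+2) = -4α v_k`
for the coefficients of `x y z^k`, whose only finitely supported solution is zero.
-/

open MvPolynomial

namespace MvPolynomial

variable {σ R : Type*} [CommRing R] [Finite σ]

/-- `coeff`, extended by zero to integer exponent vectors with a negative entry, so that shifted
indices need no case split. -/
noncomputable def coeffInt (e : σ → ℤ) : MvPolynomial σ R →ₗ[R] R :=
  open scoped Classical in
  if ∀ v, 0 ≤ e v then lcoeff R (Finsupp.equivFunOnFinite.symm fun v => (e v).toNat) else 0

theorem coeffInt_eq_coeff {e : σ → ℤ} (he : ∀ v, 0 ≤ e v) (p : MvPolynomial σ R) :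
    coeffInt e p = coeff (Finsupp.equivFunOnFinite.symm fun v => (e v).toNat) p := by
  rw [coeffInt, if_pos he]
  rfl

theorem coeffInt_of_neg {e : σ → ℤ} {v : σ} (hv : e v < 0) (p : MvPolynomial σ R) :
    coeffInt e p = 0 := by
  rw [coeffInt, if_neg (by grind)]
  rfl

theorem coeffInt_natCast (m : σ →₀ ℕ) (p : MvPolynomial σ R) :
    coeffInt (fun v => (m v : ℤ)) p = coeff m p := by
  rw [coeffInt_eq_coeff fun v => by positivity]
  congr
  ext v
  simp

theorem coeffInt_zero (p : MvPolynomial σ R) : coeffInt 0 p = constantCoeff p :=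
  coeffInt_natCast 0 p

open scoped Classical in
theorem coeffInt_one (e : σ → ℤ) :
    coeffInt e (1 : MvPolynomial σ R) = if e = 0 then 1 else 0 := by
  by_cases he : ∀ v, 0 ≤ e v
  · rw [coeffInt_eq_coeff he, coeff_one]
    refine if_congr ?_ rfl rfl
    simp only [Finsupp.ext_iff, _root_.funext_iff, Finsupp.coe_zero, Pi.zero_apply,
      Finsupp.coe_equivFunOnFinite_symm]
    exact forall_congr' fun v => by have := he v; omega
  · obtain ⟨v, hv⟩ := not_forall.mp he
    rw [coeffInt_of_neg (not_le.mp hv), if_neg fun h => hv (by simp [h])]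

theorem coeffInt_eq_zero_of_totalDegree_lt [Fintype σ] {e : σ → ℤ} {p : MvPolynomial σ R}
    (h : (p.totalDegree : ℤ) < ∑ v, e v) : coeffInt e p = 0 := by
  by_cases he : ∀ v, 0 ≤ e v
  · rw [coeffInt_eq_coeff he]
    apply coeff_eq_zero_of_totalDegree_lt
    rw [← Finsupp.degree_apply, Finsupp.degree_eq_sum]
    have hsum : ((∑ v, (e v).toNat : ℕ) : ℤ) = ∑ v, e v := by
      push_cast
      exact Finset.sum_congr rfl fun v _ => Int.toNat_of_nonneg (he v)
    simp only [Finsupp.coe_equivFunOnFinite_symm]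
    omega
  · obtain ⟨v, hv⟩ := not_forall.mp he
    exact coeffInt_of_neg (not_le.mp hv) p

variable [DecidableEq σ]

theorem coeffInt_X_mul (e : σ → ℤ) (v : σ) (p : MvPolynomial σ R) :
    coeffInt e (X v * p) = coeffInt (e - Pi.single v 1) p := by
  by_cases he : ∀ w, 0 ≤ e w
  · rw [coeffInt_eq_coeff he, coeff_X_mul']
    rcases (he v).eq_or_lt with hv | hv
    · rw [if_neg (by simp [← hv]), coeffInt_of_neg (v := v) (by simp [← hv])]
    have he' (w : σ) : 0 ≤ (e - Pi.single v 1 : σ → ℤ) w := by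
      rcases eq_or_ne w v with rfl | hw
      · simp only [Pi.sub_apply, Pi.single_eq_same]; omega
      · simp [hw, he w]
    have hmem : v ∈ (Finsupp.equivFunOnFinite.symm fun w => (e w).toNat).support := by
      rw [Finsupp.mem_support_iff, Finsupp.coe_equivFunOnFinite_symm]
      omega
    rw [if_pos hmem, coeffInt_eq_coeff he']
    congr 1
    ext w
    rcases eq_or_ne w v with rfl | hw
    · simp
    · simp [hw]
  · obtain ⟨w, hw⟩ := not_forall.mp he
    rw [coeffInt_of_neg (not_le.mp hw), coeffInt_of_neg (v := w)]
    rcases eq_or_ne w v with rfl | h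
    · simp only [Pi.sub_apply, Pi.single_eq_same]; omega
    · simp only [Pi.sub_apply, Pi.single_eq_of_ne h, sub_zero]; omega

theorem coeffInt_pderiv (e : σ → ℤ) (v : σ) (p : MvPolynomial σ R) :
    coeffInt e (pderiv v p) = coeffInt (e + Pi.single v 1) p * (e v + 1) := by
  by_cases he : ∀ w, 0 ≤ e w
  · have he' (w : σ) : 0 ≤ (e + Pi.single v 1 : σ → ℤ) w := by
      rcases eq_or_ne w v with rfl | hw
      · simp only [Pi.add_apply, Pi.single_eq_same]; linarith [he w]
      · simp [hw, he w]
    rw [coeffInt_eq_coeff he, coeff_pderiv, coeffInt_eq_coeff he']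
    congr 1
    · congr 1
      ext w
      rcases eq_or_ne w v with rfl | hw
      · simp only [Finsupp.coe_add, Finsupp.coe_equivFunOnFinite_symm, Pi.add_apply,
          Finsupp.single_eq_same, Pi.single_eq_same]
        have := he w
        omega
      · simp [hw]
    · simp only [Finsupp.coe_equivFunOnFinite_symm]
      rw [← Int.cast_natCast, Int.toNat_of_nonneg (he v)]
  · obtain ⟨w, hw⟩ := not_forall.mp he
    rw [coeffInt_of_neg (not_le.mp hw)]
    rcases eq_or_ne w v with rfl | h
    · rcases (show e w = -1 ∨ e w < -1 by omega) with h1 | h1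
      · simp [h1]
      · rw [coeffInt_of_neg (v := w) (by simp only [Pi.add_apply, Pi.single_eq_same]; omega),
          zero_mul]
    · rw [coeffInt_of_neg (v := w) (by rw [Pi.add_apply, Pi.single_eq_of_ne h, add_zero]; omega),
        zero_mul]

open scoped Classical in
theorem coeffInt_X (e : σ → ℤ) (v : σ) :
    coeffInt e (X v : MvPolynomial σ R) = if e = Pi.single v 1 then 1 else 0 := by
  rw [← mul_one (X v), coeffInt_X_mul, coeffInt_one]
  simp only [sub_eq_zero]

end MvPolynomial

theorem Int.forall_of_forall_gt_of_succ {P : ℤ → Prop} (N : ℤ) (htop : ∀ k, N < k → P k)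
    (hstep : ∀ k, P (k + 1) → P k) (k : ℤ) : P k :=
  Int.inductionOn' k (N + 1) (htop _ (by omega)) (fun _ hk _ => htop _ (by omega))
    (fun k _ h => hstep _ (by simpa using h))

theorem Int.eq_zero_of_forall_gt_of_add_two {M : Type*} [Zero M] {s : ℤ → M} (N : ℤ)
    (htop : ∀ k, N < k → s k = 0) (hstep : ∀ k, s (k + 2) = 0 → s k = 0) (k : ℤ) : s k = 0 :=
  (Int.forall_of_forall_gt_of_succ (P := fun k => s k = 0 ∧ s (k + 1) = 0) N
    (fun k hk => ⟨htop k hk, htop _ (by omega)⟩)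
    (fun k h => ⟨hstep k (by rw [add_assoc] at h; exact h.2), h.1⟩) k).1

theorem eq_zero_of_succ_mul_eq_zero {s : ℤ → ℝ} (h : ∀ k : ℤ, ((k : ℝ) + 1) * s (k + 1) = 0)
    {k : ℤ} (hk : k ≠ 0) : s k = 0 := by
  simpa [hk] using h (k - 1)

theorem eq_zero_of_mul_eq_mul_sub_two {c a : ℤ → ℝ} (hneg : ∀ i < 0, c i = 0) (h0 : c 0 = 0)
    (hrec : ∀ i : ℤ, (i : ℝ) * c i = a i * c (i - 2)) (i : ℤ) : c i = 0 := by
  suffices ∀ n : ℕ, ∀ i : ℤ, i ≤ n → c i = 0 from this i.toNat i (by omega)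
  intro n
  induction n with
  | zero =>
    intro i hi
    rcases hi.lt_or_eq with hi | rfl
    · exact hneg i hi
    · exact h0
  | succ n ih =>
    intro i hi
    rcases (show i ≤ n ∨ i = n + 1 by omega) with hi | rfl
    · exact ih i hi
    · have h := hrec (n + 1)
      rw [ih (n + 1 - 2) (by omega), mul_zero] at h
      exact (mul_eq_zero.mp h).resolve_left (by push_cast; positivity)

theorem odd_eq_zero_of_mul_eq_mul_sub_two {c a : ℤ → ℝ} (h : c (-1) = 0)
    (hrec : ∀ i : ℤ, (i : ℝ) * c i = a i * c (i - 2)) (m : ℕ) : c (2 * m + 1) = 0 := by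
  induction m with
  | zero => simpa [h] using hrec 1
  | succ m ih =>
    have h := hrec (2 * (m + 1 : ℕ) + 1)
    rw [show (2 * (m + 1 : ℕ) + 1 : ℤ) - 2 = 2 * m + 1 by push_cast; ring, ih, mul_zero] at h
    exact (mul_eq_zero.mp h).resolve_left (by push_cast; positivity)

/-- On coefficient sequences `c` of `Σ c i xⁱ y^(t-i)`, the operator `R = y ∂ₓ - α x ∂_y` is
skew-adjoint for the pairing `Σ apolarWeight α t n * c n * d n`. -/
noncomputable def apolarWeight (α : ℝ) (t n : ℕ) : ℝ := n.factorial * (t - n).factorial / α ^ n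

theorem apolarWeight_succ_mul {α : ℝ} (hα : α ≠ 0) {t n : ℕ} (hn : n < t) :
    apolarWeight α t (n + 1) * (α * (t - n)) = (n + 1) * apolarWeight α t n := by
  obtain ⟨r, rfl⟩ := Nat.exists_eq_add_of_lt hn
  rw [apolarWeight, apolarWeight, show n + r + 1 - n = r + 1 by omega,
    show n + r + 1 - (n + 1) = r by omega, Nat.factorial_succ, Nat.factorial_succ]
  field_simp
  push_cast
  ring

theorem apolarWeight_pos {α : ℝ} (hα : α ≠ 0) (t : ℕ) {n : ℕ} (hn : Even n) :
    0 < apolarWeight α t n := by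
  have := hn.pow_pos hα
  unfold apolarWeight
  positivity

section KerIm

variable {α κ : ℝ} {t : ℕ} {c d : ℤ → ℝ}

theorem mul_sum_apolarWeight_mul_sq (hα : α ≠ 0) (hc : c (-1) = 0) (hd : d (-1) = 0)
    (hker : ∀ i : ℤ, (i : ℝ) * c i = α * (t + 2 - i) * c (i - 2))
    (him : ∀ i : ℤ, (i : ℝ) * d i - α * (t + 2 - i) * d (i - 2) + κ * c (i - 1) = 0) :
    ∀ T ≤ t, κ * ∑ n ∈ Finset.range (T + 1), apolarWeight α t n * c n ^ 2
      = -(apolarWeight α t T * (T + 1) * (c T * d (T + 1) + c (T + 1) * d T)) := by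
  intro T
  induction T with
  | zero =>
    intro _
    have h₁ := hker 1
    have h₂ := him 1
    norm_num [hc, hd] at h₁ h₂
    simp only [zero_add, Finset.sum_range_one, Nat.cast_zero, h₁]
    linear_combination (apolarWeight α t 0 * c 0) * h₂
  | succ T ih =>
    intro hT
    have h₁ := him (T + 2)
    have h₂ := hker (T + 2)
    rw [show (T : ℤ) + 2 - 2 = T by ring, show (T : ℤ) + 2 - 1 = T + 1 by ring] at h₁
    rw [show (T : ℤ) + 2 - 2 = T by ring] at h₂
    rw [Finset.sum_range_succ, mul_add, ih (by omega),
      show ((T + 1 : ℕ) : ℤ) + 1 = T + 2 by push_cast; ring]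
    push_cast at h₁ h₂ ⊢
    linear_combination (apolarWeight α t (T + 1) * c (T + 1)) * h₁
      + (apolarWeight α t (T + 1) * d (T + 1)) * h₂
      + (c (T + 1) * d T + c T * d (T + 1)) * apolarWeight_succ_mul hα (t := t) (n := T) hT

theorem eq_zero_of_ker_of_im (hα : α ≠ 0) (hκ : κ ≠ 0)
    (hc : ∀ i : ℤ, i < 0 ∨ t < i → c i = 0) (hd : ∀ i : ℤ, i < 0 ∨ t < i → d i = 0)
    (hker : ∀ i : ℤ, (i : ℝ) * c i = α * (t + 2 - i) * c (i - 2))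
    (him : ∀ i : ℤ, (i : ℝ) * d i - α * (t + 2 - i) * d (i - 2) + κ * c (i - 1) = 0) (i : ℤ) :
    c i = 0 := by
  have hodd := odd_eq_zero_of_mul_eq_mul_sub_two (hc (-1) (by omega)) hker
  have hsum : ∑ n ∈ Finset.range (t + 1), apolarWeight α t n * c n ^ 2 = 0 := by
    have h := mul_sum_apolarWeight_mul_sq hα (hc (-1) (by omega)) (hd (-1) (by omega)) hker him
      t le_rfl
    rw [hc (t + 1) (by omega), hd (t + 1) (by omega)] at h
    simpa [hκ] using h
  have hnonneg : ∀ n ∈ Finset.range (t + 1), 0 ≤ apolarWeight α t n * c n ^ 2 := by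
    intro n _
    rcases Nat.even_or_odd n with hn | ⟨m, rfl⟩
    · have := apolarWeight_pos hα t hn
      positivity
    · simp [hodd m]
  rcases lt_or_ge i 0 with hi | hi
  · exact hc i (Or.inl hi)
  rcases lt_or_ge (t : ℤ) i with hti | hti
  · exact hc i (Or.inr hti)
  lift i to ℕ using hi
  rcases Nat.even_or_odd i with he | ⟨m, rfl⟩
  · have h := (Finset.sum_eq_zero_iff_of_nonneg hnonneg).mp hsum i (Finset.mem_range.mpr (by omega))
    simpa [(apolarWeight_pos hα t he).ne'] using h
  · exact_mod_cast hodd m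

end KerIm

/-- `B i j k` stands for the coefficient of `xⁱ yʲ zᵏ` in a polynomial `p` of degree at most `N`
with `X p = c₂ y + c₃ z`; `eqn` compares the coefficients of `xⁱ yʲ zᵏ` on both sides. -/
structure IsCoeffSolution (α β c₂ c₃ : ℝ) (N : ℤ) (B : ℤ → ℤ → ℤ → ℝ) : Prop where
  zero_of_neg : ∀ i j k, i < 0 ∨ j < 0 ∨ k < 0 → B i j k = 0
  zero_of_lt_deg : ∀ i j k, N < i + j + k → B i j k = 0
  eqn : ∀ i j k : ℤ, (i : ℝ) * B i (j - 1) k - i * B i j k - β * (i + 1) * B (i + 1) j (k - 1)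
      + α * (j + 1) * B i (j + 1) k - α * (j + 1) * B (i - 2) (j + 1) k
      + (k + 1) * B (i - 1) j (k + 1)
    = (if i = 0 ∧ j = 1 ∧ k = 0 then c₂ else 0) + (if i = 0 ∧ j = 0 ∧ k = 1 then c₃ else 0)

namespace IsCoeffSolution

variable {α β c₂ c₃ : ℝ} {N : ℤ} {B : ℤ → ℤ → ℤ → ℝ}

theorem top_level_eqn (hB : IsCoeffSolution α β c₂ c₃ N B) {t : ℕ} (ht : 1 ≤ t)
    (habove : ∀ i j k, (t : ℤ) < i + j → B i j k = 0) (i k : ℤ) :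
    (i : ℝ) * B i (t - i) k - α * (t + 2 - i) * B (i - 2) (t - (i - 2)) k
      + (k + 1) * B (i - 1) (t - (i - 1)) (k + 1) = 0 := by
  have h := hB.eqn i (t - (i - 1)) k
  rw [show (t : ℤ) - (i - 1) - 1 = t - i by ring,
    show (t : ℤ) - (i - 1) + 1 = t - (i - 2) by ring] at h
  simp (disch := omega) only [habove, if_neg, mul_zero, sub_zero, add_zero] at h
  push_cast at h
  linear_combination h

theorem coeff_y_pow_eq_zero (hB : IsCoeffSolution α β c₂ c₃ N B) (hα : α ≠ 0) {t : ℕ}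
    (ht : 3 ≤ t) : B 0 t 0 = 0 := by
  have h := hB.eqn 0 (t - 1) 0
  simp (disch := omega) only [hB.zero_of_neg, if_neg, sub_add_cancel] at h
  simpa [hα, show t ≠ 0 by omega] using h

theorem level_eq_zero (hB : IsCoeffSolution α β c₂ c₃ N B) (hα : α ≠ 0) {t : ℕ} (ht : 3 ≤ t)
    (habove : ∀ i j k, (t : ℤ) < i + j → B i j k = 0) (i j k : ℤ) (hij : i + j = t) :
    B i j k = 0 := by
  suffices hrow : ∀ k i, B i (t - i) k = 0 by
    rw [show j = t - i by omega]
    exact hrow k i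
  refine Int.forall_of_forall_gt_of_succ N (fun k hk i => hB.zero_of_lt_deg _ _ _ (by omega)) ?_
  intro k hnext
  have hrow (k : ℤ) := hB.top_level_eqn (by omega) habove (k := k)
  have hker (i : ℤ) :
      (i : ℝ) * B i (t - i) k = α * (t + 2 - i) * B (i - 2) (t - (i - 2)) k := by
    linear_combination hrow k i - (k + 1) * hnext (i - 1)
  rcases lt_trichotomy k 0 with hk | rfl | hk
  · exact fun i => hB.zero_of_neg _ _ _ (by omega)
  · exact eq_zero_of_mul_eq_mul_sub_two (c := fun i => B i (t - i) 0)
      (fun i hi => hB.zero_of_neg _ _ _ (by omega)) (by simpa using hB.coeff_y_pow_eq_zero hα ht)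
      hker
  · refine eq_zero_of_ker_of_im hα (κ := k) (by positivity) (c := fun i => B i (t - i) k)
      (d := fun i => B i (t - i) (k - 1)) (fun i hi => hB.zero_of_neg _ _ _ (by omega))
      (fun i hi => hB.zero_of_neg _ _ _ (by omega)) hker (fun i => ?_)
    have h := hrow (k - 1) i
    rw [sub_add_cancel] at h
    push_cast at h
    linear_combination h

theorem eq_zero_of_three_le (hB : IsCoeffSolution α β c₂ c₃ N B) (hα : α ≠ 0) (i j k : ℤ)
    (hij : 3 ≤ i + j) : B i j k = 0 := by
  refine Int.forall_of_forall_gt_of_succ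
    (P := fun t => 3 ≤ t → ∀ i j k, t ≤ i + j → B i j k = 0) N
    (fun t ht _ i j k hij => ?_) (fun t hnext ht i j k hij => ?_) 3 le_rfl i j k hij
  · rcases lt_or_ge k 0 with hk | hk
    · exact hB.zero_of_neg _ _ _ (by omega)
    · exact hB.zero_of_lt_deg _ _ _ (by omega)
  · lift t to ℕ using (by omega)
    rcases hij.lt_or_eq with hlt | heq
    · exact hnext (by omega) i j k (by omega)
    · exact hB.level_eq_zero hα (by omega) (fun i j k h => hnext (by omega) i j k (by omega))
        i j k heq.symm

/-! `eqn_m` is `eqn` at the monomial `m zᵏ`, without the terms of level `i + j ≥ 3`. -/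

theorem eqn_x3 (hB : IsCoeffSolution α β c₂ c₃ N B)
    (hhigh : ∀ i j k, 3 ≤ i + j → B i j k = 0) (k : ℤ) :
    ((k : ℝ) + 1) * B 2 0 (k + 1) = α * B 1 1 k := by
  have h := hB.eqn 3 0 k
  simp (disch := omega) [hhigh, hB.zero_of_neg] at h
  linear_combination h

theorem eqn_xy2 (hB : IsCoeffSolution α β c₂ c₃ N B)
    (hhigh : ∀ i j k, 3 ≤ i + j → B i j k = 0) (k : ℤ) :
    B 1 1 k + ((k : ℝ) + 1) * B 0 2 (k + 1) = 0 := by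
  have h := hB.eqn 1 2 k
  simp (disch := omega) [hhigh, hB.zero_of_neg] at h
  linear_combination h

theorem eqn_x2y (hB : IsCoeffSolution α β c₂ c₃ N B)
    (hhigh : ∀ i j k, 3 ≤ i + j → B i j k = 0) (k : ℤ) :
    2 * B 2 0 k - 2 * α * B 0 2 k + ((k : ℝ) + 1) * B 1 1 (k + 1) = 0 := by
  have h := hB.eqn 2 1 k
  simp (disch := omega) [hhigh] at h
  linear_combination h

theorem eqn_x2 (hB : IsCoeffSolution α β c₂ c₃ N B)
    (hhigh : ∀ i j k, 3 ≤ i + j → B i j k = 0) (k : ℤ) :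
    -2 * B 2 0 k - α * B 0 1 k + ((k : ℝ) + 1) * B 1 0 (k + 1) = 0 := by
  have h := hB.eqn 2 0 k
  simp (disch := omega) [hhigh, hB.zero_of_neg] at h
  linear_combination h

theorem eqn_xy (hB : IsCoeffSolution α β c₂ c₃ N B)
    (hhigh : ∀ i j k, 3 ≤ i + j → B i j k = 0) (k : ℤ) :
    B 1 0 k - B 1 1 k + ((k : ℝ) + 1) * B 0 1 (k + 1) = 0 := by
  have h := hB.eqn 1 1 k
  simp (disch := omega) [hhigh, hB.zero_of_neg] at h
  linear_combination h

theorem eqn_x (hB : IsCoeffSolution α β c₂ c₃ N B) (k : ℤ) :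
    -B 1 0 k - 2 * β * B 2 0 (k - 1) + α * B 1 1 k + ((k : ℝ) + 1) * B 0 0 (k + 1) = 0 := by
  have h := hB.eqn 1 0 k
  simp (disch := omega) [hB.zero_of_neg] at h
  linear_combination h

theorem eqn_y (hB : IsCoeffSolution α β c₂ c₃ N B) (k : ℤ) :
    -β * B 1 1 (k - 1) + 2 * α * B 0 2 k = if k = 0 then c₂ else 0 := by
  have h := hB.eqn 0 1 k
  simp (disch := omega) [hB.zero_of_neg] at h
  linear_combination h

theorem eqn_const (hB : IsCoeffSolution α β c₂ c₃ N B) (k : ℤ) :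
    -β * B 1 0 (k - 1) + α * B 0 1 k = if k = 1 then c₃ else 0 := by
  have h := hB.eqn 0 0 k
  simp (disch := omega) [hB.zero_of_neg] at h
  linear_combination h

theorem xy_coeff_eq_zero (hB : IsCoeffSolution α β c₂ c₃ N B) (hα : α ≠ 0)
    (hhigh : ∀ i j k, 3 ≤ i + j → B i j k = 0) (k : ℤ) : B 1 1 k = 0 := by
  refine Int.eq_zero_of_forall_gt_of_add_two (s := B 1 1) N
    (fun k hk => hB.zero_of_lt_deg _ _ _ (by omega)) (fun k h => ?_) k
  have h' := hB.eqn_x2y hhigh (k + 1)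
  rw [add_assoc, one_add_one_eq_two] at h'
  push_cast at h'
  have : α * B 1 1 k = 0 := by
    linear_combination ((k + 1) * h' - 2 * hB.eqn_x3 hhigh k + 2 * α * hB.eqn_xy2 hhigh k
      - (k + 1) * (k + 2) * h) / 4
  simpa [hα] using this

theorem x_coeff_eq_zero (hB : IsCoeffSolution α β c₂ c₃ N B) (hα : α ≠ 0)
    (hhigh : ∀ i j k, 3 ≤ i + j → B i j k = 0) (k : ℤ) : B 1 0 k = 0 := by
  refine Int.eq_zero_of_forall_gt_of_add_two (s := B 1 0) N
    (fun k hk => hB.zero_of_lt_deg _ _ _ (by omega)) (fun k h => ?_) k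
  have h' := hB.eqn_x2 hhigh (k + 1)
  rw [add_assoc, one_add_one_eq_two] at h'
  push_cast at h'
  have hv := hB.xy_coeff_eq_zero hα hhigh
  have : α * B 1 0 k = 0 := by
    linear_combination (k + 1) * h' + α * hB.eqn_xy hhigh k + 2 * hB.eqn_x3 hhigh k
      - (k + 1) * (k + 2) * h + 3 * α * hv k
  simpa [hα] using this

theorem eq_zero (hB : IsCoeffSolution α β c₂ c₃ N B) (hα : α ≠ 0) (h0 : B 0 0 0 = 0) :
    (∀ i j k, B i j k = 0) ∧ c₂ = 0 ∧ c₃ = 0 := by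
  have hhigh := hB.eq_zero_of_three_le hα
  have hv := hB.xy_coeff_eq_zero hα hhigh
  have hx := hB.x_coeff_eq_zero hα hhigh
  have hu : ∀ k ≠ 0, B 2 0 k = 0 :=
    fun k => eq_zero_of_succ_mul_eq_zero fun k => by simpa [hv] using hB.eqn_x3 hhigh k
  have hw : ∀ k ≠ 0, B 0 2 k = 0 :=
    fun k => eq_zero_of_succ_mul_eq_zero fun k => by simpa [hv] using hB.eqn_xy2 hhigh k
  have hy : ∀ k ≠ 0, B 0 1 k = 0 :=
    fun k => eq_zero_of_succ_mul_eq_zero fun k => by simpa [hv, hx] using hB.eqn_xy hhigh k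
  have hy0 : B 0 1 0 = 0 := by simpa [hx, hα] using hB.eqn_const 0
  have hu0 : B 2 0 0 = 0 := by simpa [hx, hy0] using hB.eqn_x2 hhigh 0
  have hw0 : B 0 2 0 = 0 := by simpa [hu0, hv, hα] using hB.eqn_x2y hhigh 0
  have hu' (k : ℤ) : B 2 0 k = 0 := by
    rcases eq_or_ne k 0 with rfl | hk
    exacts [hu0, hu k hk]
  have hz : ∀ k ≠ 0, B 0 0 k = 0 :=
    fun k => eq_zero_of_succ_mul_eq_zero fun k => by simpa [hv, hx, hu'] using hB.eqn_x k
  refine ⟨fun i j k => ?_, by simpa [hv, hw0] using (hB.eqn_y 0).symm,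
    by simpa [hx, hy 1 one_ne_zero] using (hB.eqn_const 1).symm⟩
  rcases lt_or_ge i 0 with hi | hi
  · exact hB.zero_of_neg _ _ _ (by omega)
  rcases lt_or_ge j 0 with hj | hj
  · exact hB.zero_of_neg _ _ _ (by omega)
  rcases lt_or_ge (i + j) 3 with hij | hij
  · have : i ≤ 2 := by omega
    have : j ≤ 2 := by omega
    rcases eq_or_ne k 0 with rfl | hk <;> interval_cases i <;> interval_cases j <;> simp_all
  · exact hhigh i j k hij

end IsCoeffSolution

noncomputable def hsaField (α β : ℝ) :
    Derivation ℝ (MvPolynomial (Fin 3) ℝ) (MvPolynomial (Fin 3) ℝ) :=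
  (X 0 * (X 1 - 1) - C β * X 2 : MvPolynomial (Fin 3) ℝ) • pderiv 0
    + (C α * (1 - X 0 ^ 2) : MvPolynomial (Fin 3) ℝ) • pderiv 1
    + (X 0 : MvPolynomial (Fin 3) ℝ) • pderiv 2

theorem hsaField_apply (α β : ℝ) (g : MvPolynomial (Fin 3) ℝ) :
    hsaField α β g = (X 0 * (X 1 - 1) - C β * X 2) * pderiv 0 g
      + (C α * (1 - X 0 ^ 2)) * pderiv 1 g + X 0 * pderiv 2 g := rfl

theorem hsaField_X_two (α β : ℝ) : hsaField α β (X 2) = X 0 := by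
  simp [hsaField_apply, pderiv_X]

noncomputable def hsaQuadratic (α β : ℝ) : MvPolynomial (Fin 3) ℝ :=
  C (-(1 : ℝ) / 2) * X 0 ^ 2 + C (1 / α) * X 1 - C (1 / (2 * α)) * X 1 ^ 2 - C (β / 2) * X 2 ^ 2

theorem hsaField_hsaQuadratic {α : ℝ} (β : ℝ) (hα : α ≠ 0) :
    hsaField α β (hsaQuadratic α β) = 1 - X 1 := by
  have h₁ : (C (-1 / 2) * 2 : MvPolynomial (Fin 3) ℝ) = -1 := by
    rw [← map_ofNat C 2, ← C_mul]; norm_num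
  have h₂ : (C α * C α⁻¹ : MvPolynomial (Fin 3) ℝ) = 1 := by
    rw [← C_mul, mul_inv_cancel₀ hα, C_1]
  have h₃ : (C 2⁻¹ * 2 : MvPolynomial (Fin 3) ℝ) = 1 := by
    rw [← map_ofNat C 2, ← C_mul]; norm_num
  have h₄ : (C (β / 2) * 2 : MvPolynomial (Fin 3) ℝ) = C β := by
    rw [← map_ofNat C 2, ← C_mul]; norm_num
  simp [hsaQuadratic, hsaField_apply, pderiv_X]
  linear_combination ((X 0 * (X 1 - 1) - C β * X 2) * X 0) * h₁
    + (1 - X 0 ^ 2) * (1 - 2 * C 2⁻¹ * X 1) * h₂ - (1 - X 0 ^ 2) * X 1 * h₃ - X 0 * X 2 * h₄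

theorem isCoeffSolution_of_hsaField {α β c₂ c₃ : ℝ} {p : MvPolynomial (Fin 3) ℝ}
    (hp : hsaField α β p = C c₂ * X 1 + C c₃ * X 2) :
    IsCoeffSolution α β c₂ c₃ p.totalDegree (fun i j k => coeffInt ![i, j, k] p) where
  zero_of_neg i j k h := by
    rcases h with h | h | h
    exacts [coeffInt_of_neg (v := 0) h p, coeffInt_of_neg (v := 1) h p,
      coeffInt_of_neg (v := 2) h p]
  zero_of_lt_deg i j k h :=
    coeffInt_eq_zero_of_totalDegree_lt (by simpa [Fin.sum_univ_three, add_assoc] using h)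
  eqn i j k := by
    have E := congrArg (coeffInt ![i, j, k]) hp
    rw [hsaField_apply, show (X 0 * (X 1 - 1) - C β * X 2) * pderiv 0 p
        + C α * (1 - X 0 ^ 2) * pderiv 1 p + X 0 * pderiv 2 p
        = X 0 * (X 1 * pderiv 0 p) - X 0 * pderiv 0 p - C β * (X 2 * pderiv 0 p)
          + C α * pderiv 1 p - C α * (X 0 * (X 0 * pderiv 1 p)) + X 0 * pderiv 2 p by ring] at E
    simp [coeffInt_X_mul, coeffInt_pderiv, C_mul', coeffInt_X, Matrix.vecHead, Matrix.vecTail,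
      sub_sub, _root_.funext_iff, Fin.forall_fin_succ, Pi.single_apply] at E
    linear_combination E

theorem eq_zero_of_coeffInt_vec_eq_zero {p : MvPolynomial (Fin 3) ℝ}
    (h : ∀ i j k, coeffInt ![i, j, k] p = 0) : p = 0 := by
  refine eq_zero_iff.mpr fun m => ?_
  have hm : (fun v => (m v : ℤ)) = ![(m 0 : ℤ), m 1, m 2] := by
    funext v
    fin_cases v <;> rfl
  rw [← coeffInt_natCast, hm]
  exact h _ _ _

/-- Prop. 3, Case 2: α ≠ 0, κ = λ = 0. Every polynomial g with
no constant term satisfying X g = β₀ + β₁x + β₂y + β₃z is the linear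
combination β₁·z + β₀·(-x²/2 + y/α - y²/(2α) - βz²/2); in particular
β₂ = -β₀ and β₃ = 0. -/
theorem stmt_9 (α β : ℝ) (hα : α ≠ 0) (β₀ β₁ β₂ β₃ : ℝ)
    (g : MvPolynomial (Fin 3) ℝ) (hg0 : g.coeff 0 = 0)
    (heq : (X 0 * (X 1 - 1) - C β * X 2) * pderiv 0 g
      + (C α * (1 - X 0 ^ 2)) * pderiv 1 g
      + X 0 * pderiv 2 g
      = C β₀ + C β₁ * X 0 + C β₂ * X 1 + C β₃ * X 2) :
    β₂ = -β₀ ∧ β₃ = 0 ∧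
      g = C β₁ * X 2 + C β₀ *
        (C (-(1 : ℝ) / 2) * X 0 ^ 2 + C (1 / α) * X 1
          - C (1 / (2 * α)) * X 1 ^ 2 - C (β / 2) * X 2 ^ 2) := by
  change _ ∧ _ ∧ g = C β₁ * X 2 + C β₀ * hsaQuadratic α β
  set q := C β₁ * X 2 + C β₀ * hsaQuadratic α β with hq
  have hXq : hsaField α β q = C β₁ * X 0 + C β₀ * (1 - X 1) := by
    simp only [hq, map_add, C_mul', Derivation.map_smul, hsaField_X_two,
      hsaField_hsaQuadratic β hα]
  have hdiff : hsaField α β (g - q) = C (β₂ + β₀) * X 1 + C β₃ * X 2 := by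
    rw [map_sub, hXq, hsaField_apply α β g, heq, C_add]
    ring
  have h0 : coeffInt ![0, 0, 0] (g - q) = 0 := by
    have hg0' : constantCoeff g = 0 := hg0
    rw [show (![0, 0, 0] : Fin 3 → ℤ) = 0 by simp, coeffInt_zero]
    simp [hq, hsaQuadratic, hg0']
  obtain ⟨hzero, hc₂, hc₃⟩ := (isCoeffSolution_of_hsaField hdiff).eq_zero hα h0
  exact ⟨by linarith, hc₃, sub_eq_zero.mp (eq_zero_of_coeffInt_vec_eq_zero hzero)⟩
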